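/- arXiv:2208.08365 — 5 statements merged into one kernel-verified Lean document; each statement's English description precedes it below -/
import Mathlib

section
/- Let k be an algebraically closed field of characteristic zero, μ ∈ k[[z]] a non-constant formal power series, and a, b ∈ k*. If μ ∘ (az) = (bz) ∘ μ, i.e., μ(az) = b·μ(z), then b = a^r where r is the order of μ; moreover, either μ = c·z^r for some c ∈ k*, or a is a root of unity. -/
open PowerSeries

/-- Composition (substitution) `comp A B = A ∘ B` of formal power series,
the standard coefficient formula, well-behaved when `B` has zero constant term. -/
noncomputable def comp {k : Type*} [Field k] (A B : PowerSeries k) : PowerSeries k :=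
  PowerSeries.mk fun n =>
    ∑ i ∈ Finset.range (n + 1), (PowerSeries.coeff i A) * (PowerSeries.coeff n (B ^ i))

/-- `iterComp φ j` is the `j`-fold compositional iterate `φ^{∘j}` (with `φ^{∘0} = z`). -/
noncomputable def iterComp {k : Type*} [Field k] (φ : PowerSeries k) : ℕ → PowerSeries k
  | 0 => PowerSeries.X
  | n + 1 => comp φ (iterComp φ n)

/-- Composition of a list of power series: `compList [A₁, …, A_r] = A₁ ∘ ⋯ ∘ A_r`. -/
noncomputable def compList {k : Type*} [Field k] : List (PowerSeries k) → PowerSeries k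
  | [] => PowerSeries.X
  | a :: t => comp a (compList t)

theorem comp_C_mul_X {k : Type*} [Field k] (μ : PowerSeries k) (a : k) :
    comp μ (C a * X) = rescale a μ := by
  ext n
  rw [comp, coeff_mk, coeff_rescale, Finset.sum_eq_single n]
  · rw [mul_pow, ← map_pow, coeff_C_mul_X_pow, if_pos rfl, mul_comm]
  · intro i _ hin
    rw [mul_pow, ← map_pow, coeff_C_mul_X_pow, if_neg (Ne.symm hin), mul_zero]
  · intro hn
    exact absurd (Finset.self_mem_range_succ n) hn

theorem pow_eq_of_rescale_eq_C_mul {R : Type*} [CommRing R] [NoZeroDivisors R]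
    {μ : PowerSeries R} {a b : R} (h : rescale a μ = C b * μ) {n : ℕ}
    (hn : coeff n μ ≠ 0) : a ^ n = b := by
  have hcoeff := congrArg (coeff n) h
  rw [coeff_rescale, coeff_C_mul] at hcoeff
  exact mul_right_cancel₀ hn hcoeff

theorem eq_C_mul_X_pow_of_coeff_eq_zero {R : Type*} [Semiring R] {μ : PowerSeries R} {r : ℕ}
    (h : ∀ n, n ≠ r → coeff n μ = 0) : μ = C (coeff r μ) * X ^ r := by
  ext n
  rw [coeff_C_mul_X_pow]
  split_ifs with hn
  · rw [hn]
  · exact h n hn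

theorem stmt1_general {k : Type*} [Field k]
    (μ : PowerSeries k) (hμ : ∀ c : k, μ ≠ C c)
    {a b : k} (ha : a ≠ 0)
    (h : comp μ (C a * X) = C b * μ) :
    ∃ r : ℕ, μ.order = (r : ℕ∞) ∧ b = a ^ r ∧
      ((∃ c : k, c ≠ 0 ∧ μ = C c * X ^ r) ∨ ∃ m : ℕ, 0 < m ∧ a ^ m = 1) := by
  rw [comp_C_mul_X] at h
  have hμ0 : μ ≠ 0 := by simpa using hμ 0
  obtain ⟨r, hr⟩ := ENat.ne_top_iff_exists.mp (order_eq_top.not.mpr hμ0)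
  obtain ⟨hcr, hbelow⟩ := order_eq_nat.mp hr.symm
  have hb : b = a ^ r := (pow_eq_of_rescale_eq_C_mul h hcr).symm
  refine ⟨r, hr.symm, hb, ?_⟩
  by_cases hmono : ∀ n, n ≠ r → coeff n μ = 0
  · exact Or.inl ⟨_, hcr, eq_C_mul_X_pow_of_coeff_eq_zero hmono⟩
  · push Not at hmono
    obtain ⟨n, hnr, hcn⟩ := hmono
    have hrn : r < n := hnr.symm.lt_of_le (not_lt.mp fun hlt => hcn (hbelow n hlt))
    refine Or.inr ⟨n - r, Nat.sub_pos_of_lt hrn, ?_⟩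
    rw [pow_sub₀ a ha hrn.le, pow_eq_of_rescale_eq_C_mul h hcn, hb,
      mul_inv_cancel₀ (pow_ne_zero r ha)]

theorem stmt1 {k : Type*} [Field k] [IsAlgClosed k] [CharZero k]
    (μ : PowerSeries k) (hμ : ∀ c : k, μ ≠ C c)
    {a b : k} (ha : a ≠ 0) (hb : b ≠ 0)
    (h : comp μ (C a * X) = C b * μ) :
    ∃ r : ℕ, μ.order = (r : ℕ∞) ∧ b = a ^ r ∧
      ((∃ c : k, c ≠ 0 ∧ μ = C c * X ^ r) ∨ ∃ m : ℕ, 0 < m ∧ a ^ m = 1) :=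
  stmt1_general μ hμ ha h
end

section
/- Let k be an algebraically closed field of characteristic zero and n ≥ 2. Non-constant formal power series μ₁, μ₂ ∈ k[[z]] satisfy μ₁(z)^n = μ₂(z^n) (i.e., z^n ∘ μ₁ = μ₂ ∘ z^n) if and only if there exist R ∈ k[[z]] and an integer r with 0 ≤ r ≤ n−1 such that μ₁(z) = z^r·R(z^n) and μ₂(z) = z^r·R(z)^n. -/
open PowerSeries

/-!
Write `f = X^d · g` with `g(0) ≠ 0`. If `f^n` only has exponents divisible by `n`, so does `g^n`,
and then so does `g`: otherwise split `g = a + b` into its part `a` on multiples of `n` and the rest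
`b`, of order `m`, say. The exponents of `a^n` are multiples of `n` and `b²` has order `2m > m`,
so the coefficient of `X^m` in `g^n = (a + b)^n` is `n · g(0)^(n-1) · g_m ≠ 0` (characteristic
zero), although `n ∤ m`. Hence `g = G(X^n)` and `f = X^(d mod n) · (X^(d / n) G)(X^n)`.
-/

namespace PowerSeries

section CommRing

variable {R : Type*} [CommRing R] {n : ℕ} (hn : n ≠ 0)

theorem expand_injective : Function.Injective (expand n hn : R⟦X⟧ → R⟦X⟧) :=
  fun f g h => ext fun i => by simpa using congrArg (coeff (n * i)) h

noncomputable def contract (n : ℕ) (g : R⟦X⟧) : R⟦X⟧ :=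
  mk fun i => coeff (n * i) g

theorem coeff_expand_contract (g : R⟦X⟧) (j : ℕ) :
    coeff j (expand n hn (contract n g)) = if n ∣ j then coeff j g else 0 := by
  rw [coeff_expand]
  split_ifs with hj
  · rw [contract, coeff_mk, Nat.mul_div_cancel' hj]
  · rfl

theorem constantCoeff_contract (g : R⟦X⟧) : constantCoeff (contract n g) = constantCoeff g := by
  rw [← coeff_zero_eq_constantCoeff_apply, ← coeff_zero_eq_constantCoeff_apply, contract,
    coeff_mk, mul_zero]

theorem expand_contract {g : R⟦X⟧} (hg : ∀ t, ¬ n ∣ t → coeff t g = 0) :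
    expand n hn (contract n g) = g :=
  ext fun t => by rw [coeff_expand_contract, ite_eq_left_iff]; exact fun ht => (hg t ht).symm

theorem X_pow_mul_expand_pow (r : ℕ) (G : R⟦X⟧) :
    (X ^ r * expand n hn G) ^ n = expand n hn (X ^ r * G ^ n) := by
  rw [map_mul, map_pow, map_pow, expand_X, mul_pow, ← pow_mul, ← pow_mul, mul_comm r n]

end CommRing

section CharZero

variable {R : Type*} [CommRing R] [IsDomain R] [CharZero R] {n : ℕ}

theorem coeff_eq_zero_of_coeff_pow_eq_zero (hn : n ≠ 0) {g : R⟦X⟧}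
    (hg : constantCoeff g ≠ 0) (hpow : ∀ t, ¬ n ∣ t → coeff t (g ^ n) = 0) :
    ∀ t, ¬ n ∣ t → coeff t g = 0 := by
  classical
  by_contra! h
  obtain ⟨hm, hgm⟩ := Nat.find_spec h
  set m := Nat.find h
  have hgm_lt : ∀ j < m, ¬ n ∣ j → coeff j g = 0 := fun j hj hnj =>
    not_not.1 fun hj' => Nat.find_min h hj ⟨hnj, hj'⟩
  set A := contract n g
  obtain ⟨c, hc⟩ : X ^ m ∣ g - expand n hn A := X_pow_dvd_iff.2 fun j hj => by
    rw [map_sub, coeff_expand_contract]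
    split_ifs with hnj
    · exact sub_self _
    · rw [hgm_lt j hj hnj, sub_zero]
  have hc0 : constantCoeff c = coeff m g := by
    simpa [A, coeff_expand_contract, hm, coeff_X_pow_mul'] using (congrArg (coeff m) hc).symm
  have hm0 : m ≠ 0 := by rintro h0; exact hm (h0 ▸ dvd_zero n)
  obtain ⟨Q, hQ⟩ := sq_dvd_add_pow_sub_sub (X ^ m * c) (expand n hn A) n
  have hsplit : g ^ n = expand n hn (A ^ n) + (n : R⟦X⟧) * (expand n hn A) ^ (n - 1) * c * X ^ m
      + X ^ (m + m) * (c ^ 2 * Q) := by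
    rw [show g = expand n hn A + X ^ m * c by rw [← hc]; ring, map_pow]
    linear_combination hQ
  have hcoeff : (n : R) * constantCoeff g ^ (n - 1) * coeff m g = 0 := by
    have := hpow m hm
    rw [hsplit, map_add, map_add, coeff_expand_of_not_dvd _ _ _ hm, coeff_X_pow_mul',
      if_neg (by omega), coeff_mul_X_pow', if_pos le_rfl, Nat.sub_self] at this
    simpa [A, constantCoeff_contract, hc0] using this
  exact mul_ne_zero (mul_ne_zero (Nat.cast_ne_zero.2 hn) (pow_ne_zero _ hg)) hgm hcoeff

theorem exists_eq_X_pow_mul_expand (hn : n ≠ 0) {f : R⟦X⟧}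
    (hf : ∀ t, ¬ n ∣ t → coeff t (f ^ n) = 0) :
    ∃ (G : R⟦X⟧) (r : ℕ), r < n ∧ f = X ^ r * expand n hn G := by
  rcases eq_or_ne f 0 with rfl | hf0
  · exact ⟨0, 0, Nat.pos_of_ne_zero hn, by simp⟩
  set d := f.order.toNat
  have hfg : f = X ^ d * divXPowOrder f := X_pow_order_mul_divXPowOrder.symm
  have hgpow : ∀ t, ¬ n ∣ t → coeff t (divXPowOrder f ^ n) = 0 := fun t ht => by
    have := hf (t + d * n) ((Nat.dvd_add_left (dvd_mul_left n d)).not.2 ht)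
    rwa [hfg, mul_pow, ← pow_mul, coeff_X_pow_mul] at this
  have hG := expand_contract hn <|
    coeff_eq_zero_of_coeff_pow_eq_zero hn (constantCoeff_divXPowOrder_eq_zero_iff.not.2 hf0) hgpow
  refine ⟨X ^ (d / n) * contract n (divXPowOrder f), d % n,
    Nat.mod_lt _ (Nat.pos_of_ne_zero hn), ?_⟩
  rw [map_mul, map_pow, expand_X, hG, ← mul_assoc, ← pow_mul, ← pow_add, Nat.mod_add_div]
  exact hfg

end CharZero

end PowerSeries

theorem comp_X_pow_eq_expand {k : Type*} [Field k] {n : ℕ} (hn : n ≠ 0) (A : PowerSeries k) :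
    comp A (X ^ n) = expand n hn A := by
  have hn0 := Nat.pos_of_ne_zero hn
  ext m
  simp_rw [comp, coeff_mk, coeff_expand, ← pow_mul, coeff_X_pow, mul_ite, mul_one, mul_zero]
  split_ifs with hm
  · obtain ⟨c, rfl⟩ := hm
    rw [Finset.sum_eq_single_of_mem c, if_pos rfl, Nat.mul_div_cancel_left _ hn0]
    · exact Finset.mem_range_succ_iff.2 (Nat.le_mul_of_pos_left c hn0)
    · exact fun i _ hi => if_neg fun h => hi (Nat.eq_of_mul_eq_mul_left hn0 h).symm
  · exact Finset.sum_eq_zero fun i _ => if_neg fun h => hm ⟨i, h⟩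

theorem stmt4_general {k : Type*} [Field k] [CharZero k]
    {n : ℕ} (hn : 2 ≤ n) (μ₁ μ₂ : PowerSeries k) :
    μ₁ ^ n = comp μ₂ (X ^ n) ↔
      ∃ (R : PowerSeries k) (r : ℕ), r ≤ n - 1 ∧
        μ₁ = X ^ r * comp R (X ^ n) ∧ μ₂ = X ^ r * R ^ n := by
  have hn0 : n ≠ 0 := by omega
  simp_rw [comp_X_pow_eq_expand hn0]
  constructor
  · intro H
    obtain ⟨R, r, hr, rfl⟩ := exists_eq_X_pow_mul_expand hn0 fun t ht => by
      rw [H, coeff_expand_of_not_dvd _ _ _ ht]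
    refine ⟨R, r, by omega, rfl, expand_injective hn0 ?_⟩
    rw [← H, X_pow_mul_expand_pow]
  · rintro ⟨R, r, -, rfl, rfl⟩
    exact X_pow_mul_expand_pow hn0 r R

theorem stmt4 {k : Type*} [Field k] [IsAlgClosed k] [CharZero k]
    {n : ℕ} (hn : 2 ≤ n) (μ₁ μ₂ : PowerSeries k)
    (h₁ : ∀ c : k, μ₁ ≠ C c) (h₂ : ∀ c : k, μ₂ ≠ C c) :
    μ₁ ^ n = comp μ₂ (X ^ n) ↔
      ∃ (R : PowerSeries k) (r : ℕ), r ≤ n - 1 ∧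
        μ₁ = X ^ r * comp R (X ^ n) ∧ μ₂ = X ^ r * R ^ n :=
  stmt4_general hn μ₁ μ₂
end

section
/- Let k be an algebraically closed field of characteristic zero, A ∈ k[[z]] of order n ≥ 2, and β_A a Böttcher function for A (so A ∘ β_A = β_A ∘ z^n with β_A of order 1). Then a series φ ∈ k[[z]] of order 1 satisfies A ∘ φ = A if and only if φ = β_A ∘ (εz) ∘ β_A^{-1} for some n-th root of unity ε. -/
/-!
Conjugating by the Böttcher function turns `A` into `z ^ n`, and `A ∘ φ = A` into `ψ ^ n = z ^ n`
for `ψ = β⁻¹ ∘ φ ∘ β`. Writing `ψ = z u`, this says `u ^ n = 1`; then `v = u / u(0)` satisfies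
`(1 + v + ⋯ + v ^ (n - 1)) (v - 1) = 0`, and the first factor has constant term `n ≠ 0`, so `v = 1`
and `ψ = u(0) z` with `u(0) ^ n = 1`.
-/

open PowerSeries

section Comp

variable {k : Type*} [Field k]

lemma coeff_comp (A B : k⟦X⟧) (m : ℕ) :
    coeff m (comp A B) = ∑ i ∈ Finset.range (m + 1), coeff i A * coeff m (B ^ i) :=
  coeff_mk _ _

lemma constantCoeff_comp (A B : k⟦X⟧) : constantCoeff (comp A B) = constantCoeff A := by
  simpa using coeff_comp A B 0

lemma comp_eq_subst (A : k⟦X⟧) {B : k⟦X⟧} (hB : constantCoeff B = 0) :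
    comp A B = A.subst B := by
  ext m
  rw [coeff_comp, coeff_subst' (HasSubst.of_constantCoeff_zero' hB),
    finsum_eq_sum_of_support_subset _ (s := Finset.range (m + 1))]
  · simp only [smul_eq_mul]
  · intro i hi
    by_contra hm
    refine hi ?_
    have hlt : (m : ℕ∞) < (B ^ i).order :=
      (Nat.cast_lt.mpr (by simpa using hm)).trans_le (le_order_pow_of_constantCoeff_eq_zero i hB)
    simp [coeff_of_lt_order m hlt]

lemma comp_assoc (A : k⟦X⟧) {B C : k⟦X⟧} (hB : constantCoeff B = 0) (hC : constantCoeff C = 0) :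
    comp (comp A B) C = comp A (comp B C) := by
  have hBC : constantCoeff (comp B C) = 0 := by rw [constantCoeff_comp, hB]
  rw [comp_eq_subst _ hBC, comp_eq_subst B hC, comp_eq_subst _ hB, comp_eq_subst _ hC,
    subst_comp_subst_apply (HasSubst.of_constantCoeff_zero' hB)
      (HasSubst.of_constantCoeff_zero' hC)]

lemma comp_X (A : k⟦X⟧) : comp A X = A := by
  rw [comp_eq_subst A constantCoeff_X, X_subst]

lemma X_pow_comp {B : k⟦X⟧} (hB : constantCoeff B = 0) (n : ℕ) : comp (X ^ n) B = B ^ n := by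
  rw [comp_eq_subst _ hB, subst_pow (HasSubst.of_constantCoeff_zero' hB),
    subst_X (HasSubst.of_constantCoeff_zero' hB)]

lemma X_comp {B : k⟦X⟧} (hB : constantCoeff B = 0) : comp X B = B := by
  simpa using X_pow_comp hB 1

end Comp

section Cancel

variable {k : Type*} [Field k] {β βi : k⟦X⟧}

lemma comp_comp_cancel_left (hβ : constantCoeff β = 0) (h : comp βi β = X) {F : k⟦X⟧}
    (hF : constantCoeff F = 0) : comp βi (comp β F) = F := by
  rw [← comp_assoc βi hβ hF, h, X_comp hF]

lemma comp_comp_cancel_right (hβ : constantCoeff β = 0) (hβi : constantCoeff βi = 0)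
    (h : comp β βi = X) (F : k⟦X⟧) : comp (comp F β) βi = F := by
  rw [comp_assoc F hβ hβi, h, comp_X]

lemma comp_left_inj (hβ : constantCoeff β = 0) (h : comp βi β = X) {F G : k⟦X⟧}
    (hF : constantCoeff F = 0) (hG : constantCoeff G = 0) : comp β F = comp β G ↔ F = G :=
  ⟨fun hFG => by rw [← comp_comp_cancel_left hβ h hF, hFG, comp_comp_cancel_left hβ h hG],
    congrArg _⟩

lemma comp_right_inj (hβ : constantCoeff β = 0) (hβi : constantCoeff βi = 0)
    (h : comp β βi = X) {F G : k⟦X⟧} : comp F β = comp G β ↔ F = G :=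
  ⟨fun hFG => by
    rw [← comp_comp_cancel_right hβ hβi h F, hFG, comp_comp_cancel_right hβ hβi h G],
    congrArg (comp · β)⟩

lemma comp_eq_comp_iff_eq_comp_comp (hβ : constantCoeff β = 0) (hβi : constantCoeff βi = 0)
    (h₁ : comp β βi = X) (h₂ : comp βi β = X) {F G : k⟦X⟧} :
    comp F β = comp β G ↔ F = comp (comp β G) βi := by
  rw [← comp_right_inj hβ hβi h₁ (F := F) (G := comp (comp β G) βi),
    comp_comp_cancel_right hβi hβ h₂]

end Cancel

section RootsOfUnity

variable {k : Type*} [Field k] [CharZero k] {n : ℕ}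

lemma eq_one_of_pow_eq_one {v : k⟦X⟧} (hn : n ≠ 0) (hv : constantCoeff v = 1) (h : v ^ n = 1) :
    v = 1 := by
  have hgeom : constantCoeff (∑ i ∈ Finset.range n, v ^ i) ≠ 0 := by simp [hv, hn]
  have hmul : (∑ i ∈ Finset.range n, v ^ i) * (v - 1) = 0 := by
    rw [geom_sum_mul, h, sub_self]
  exact sub_eq_zero.mp <|
    (mul_eq_zero.mp hmul).resolve_left fun h0 => hgeom (by rw [h0, map_zero])

lemma pow_eq_X_pow_iff (hn : n ≠ 0) {ψ : k⟦X⟧} :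
    ψ ^ n = X ^ n ↔ ∃ ε : k, ε ^ n = 1 ∧ ψ = C ε * X := by
  refine ⟨fun h => ?_, fun ⟨ε, hε, hψ⟩ => by rw [hψ, mul_pow, ← map_pow, hε, map_one, one_mul]⟩
  have hψ0 : constantCoeff ψ = 0 := by
    simpa [hn] using congrArg constantCoeff h
  obtain ⟨u, rfl⟩ := X_dvd_iff.mpr hψ0
  have hu : u ^ n = 1 := by
    refine mul_left_cancel₀ (pow_ne_zero n X_ne_zero) ?_
    rw [← mul_pow, h, mul_one]
  set c := constantCoeff u
  have hc : c ^ n = 1 := by rw [← map_pow, hu, map_one]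
  have hc0 : c ≠ 0 := by rintro h0; simp [h0, hn] at hc
  have hv : C c⁻¹ * u = 1 := by
    refine eq_one_of_pow_eq_one hn (by simp [c, hc0]) ?_
    rw [mul_pow, ← map_pow, inv_pow, hc, hu, inv_one, map_one, one_mul]
  have huc : u = C c := by
    calc u = C c * (C c⁻¹ * u) := by
          rw [← mul_assoc, ← map_mul, mul_inv_cancel₀ hc0, map_one, one_mul]
      _ = C c := by rw [hv, mul_one]
  exact ⟨c, hc, by rw [huc, mul_comm]⟩

end RootsOfUnity

theorem stmt6_general {k : Type*} [Field k] [CharZero k]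
    {n : ℕ} (hn : 2 ≤ n) (A : PowerSeries k)
    (β βi : PowerSeries k)
    (hβA : comp A β = comp β (X ^ n))
    (hβi1 : comp β βi = X) (hβi2 : comp βi β = X)
    (φ : PowerSeries k) (hφ : φ.order = 1) :
    comp A φ = A ↔ ∃ ε : k, ε ^ n = 1 ∧ φ = comp (comp β (C ε * X)) βi := by
  have hn0 : n ≠ 0 := by omega
  have hβ : constantCoeff β = 0 := by
    simpa [constantCoeff_comp] using congrArg constantCoeff hβi1
  have hβi : constantCoeff βi = 0 := by
    simpa [constantCoeff_comp] using congrArg constantCoeff hβi2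
  have hφ0 : constantCoeff φ = 0 := one_le_order_iff_constCoeff_eq_zero.mp hφ.ge
  have hXn : constantCoeff (X ^ n : k⟦X⟧) = 0 := by simp [hn0]
  set ψ := comp βi (comp φ β)
  have hψ : constantCoeff ψ = 0 := by rw [constantCoeff_comp, hβi]
  have hβψ : comp β ψ = comp φ β :=
    comp_comp_cancel_left hβi hβi1 (by rw [constantCoeff_comp, hφ0])
  calc comp A φ = A ↔ comp (comp A φ) β = comp A β := (comp_right_inj hβ hβi hβi1).symm
    _ ↔ comp β (ψ ^ n) = comp β (X ^ n) := by
      rw [comp_assoc A hφ0 hβ, ← hβψ, ← comp_assoc A hβ hψ, hβA, comp_assoc β hXn hψ,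
        X_pow_comp hψ]
    _ ↔ ψ ^ n = X ^ n := comp_left_inj hβ hβi2 (by simp [hψ, hn0]) hXn
    _ ↔ ∃ ε : k, ε ^ n = 1 ∧ ψ = C ε * X := pow_eq_X_pow_iff hn0
    _ ↔ _ := exists_congr fun ε => and_congr_right fun _ => by
      rw [← comp_left_inj hβ hβi2 hψ (by simp), hβψ,
        comp_eq_comp_iff_eq_comp_comp hβ hβi hβi1 hβi2]

theorem stmt6 {k : Type*} [Field k] [IsAlgClosed k] [CharZero k]
    {n : ℕ} (hn : 2 ≤ n) (A : PowerSeries k) (hA : A.order = (n : ℕ∞))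
    (β βi : PowerSeries k) (hβ : β.order = 1)
    (hβA : comp A β = comp β (X ^ n))
    (hβi1 : comp β βi = X) (hβi2 : comp βi β = X)
    (φ : PowerSeries k) (hφ : φ.order = 1) :
    comp A φ = A ↔ ∃ ε : k, ε ^ n = 1 ∧ φ = comp (comp β (C ε * X)) βi :=
  stmt6_general hn A β βi hβA hβi1 hβi2 φ hφ
end

section
/- Let k be an algebraically closed field of characteristic zero and A ∈ k[[z]] of order at least 2. If some iterate A^{∘s}, s ≥ 1, has the form z^r·R(z^m) for some R ∈ k[[z]] and integers m ≥ 2, r ≥ 0, then A itself has the form z^{r₀}·R₀(z^m) for some R₀ ∈ k[[z]] and integer r₀ ≥ 0. -/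
open PowerSeries

/-!
Let `ζ` be a primitive `m`-th root of unity. A series has the form `X ^ r * R (X ^ m)` for some
`r` and `R` iff `F (ζ z) = ζ ^ r F (z)` for some `r`, so `A^{∘s}` has this symmetry and it
suffices to show `A (ζ z) = ζ ^ d A (z)`, where `d = ord A`. Otherwise the defect
`A (ζ z) - ζ ^ d A (z)` has order `d + p` with `p ≥ 1`, and a first-order Taylor expansion shows
that the defect `A^{∘t} (ζ z) - ζ ^ (d ^ t) A^{∘t} (z)` of every iterate has order exactly
`d ^ t + p`; for `t = s` this contradicts the symmetry of `A^{∘s}`.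
-/

namespace PowerSeries

variable {R : Type*} [CommRing R]

theorem exists_eq_X_pow_mul_of_order_eq {f : R⟦X⟧} {n : ℕ} (hf : f.order = n) :
    ∃ u : R⟦X⟧, constantCoeff u ≠ 0 ∧ f = X ^ n * u := by
  have hn : f.order.toNat = n := by simp [hf]
  refine ⟨divXPowOrder f, ?_, ?_⟩
  · rw [constantCoeff_divXPowOrder, hn]
    exact (order_eq_nat.1 hf).1
  · rw [← hn, X_pow_order_mul_divXPowOrder]

theorem order_X_pow_mul {u : R⟦X⟧} (hu : constantCoeff u ≠ 0) (n : ℕ) :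
    (X ^ n * u).order = (n : ℕ∞) := by
  refine order_eq_nat.2 ⟨by simpa [coeff_X_pow_mul'] using hu, fun i hi => ?_⟩
  rw [coeff_X_pow_mul', if_neg (by omega)]

theorem subst_X_pow_mul {G : R⟦X⟧} (hG : HasSubst G) (n : ℕ) (u : R⟦X⟧) :
    (X ^ n * u).subst G = G ^ n * u.subst G := by
  rw [subst_mul hG, subst_pow hG, subst_X hG]

theorem constantCoeff_subst_of_constantCoeff_eq_zero {G : R⟦X⟧} (hG : constantCoeff G = 0)
    (F : R⟦X⟧) : constantCoeff (F.subst G) = constantCoeff F := by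
  rw [← coeff_zero_eq_constantCoeff_apply, coeff_subst' (HasSubst.of_constantCoeff_zero' hG),
    finsum_eq_single _ 0]
  · simp
  · intro i hi
    rw [coeff_zero_eq_constantCoeff_apply, map_pow, hG, zero_pow hi, smul_zero]

theorem X_pow_dvd_subst_sub_subst {V W : R⟦X⟧} (hV : HasSubst V) (hW : HasSubst W) {N : ℕ}
    (h : X ^ N ∣ V - W) (F : R⟦X⟧) : X ^ N ∣ F.subst V - F.subst W := by
  refine X_pow_dvd_iff.2 fun n hn => ?_
  rw [map_sub, coeff_subst' hV, coeff_subst' hW,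
    ← finsum_sub_distrib (coeff_subst_finite' hV F n) (coeff_subst_finite' hW F n)]
  refine finsum_eq_zero_of_forall_eq_zero fun i => ?_
  rw [← smul_sub, ← map_sub, X_pow_dvd_iff.1 (h.trans (sub_dvd_pow_sub_pow V W i)) n hn,
    smul_zero]

theorem rescale_subst (c : R) {G : R⟦X⟧} (hG : HasSubst G) (F : R⟦X⟧) :
    rescale c (F.subst G) = F.subst (rescale c G) := by
  rw [rescale_eq_subst, rescale_eq_subst c G, subst_comp_subst_apply hG (HasSubst.smul_X' c)]

theorem subst_C_mul (c : R) {G : R⟦X⟧} (hG : HasSubst G) (F : R⟦X⟧) :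
    F.subst (C c * G) = (rescale c F).subst G := by
  rw [rescale_eq_subst, subst_comp_subst_apply (HasSubst.smul_X' c) hG, subst_smul hG, subst_X hG,
    smul_eq_C_mul]

section IsDomain

variable [IsDomain R]

theorem order_C_mul {c : R} (hc : c ≠ 0) (G : R⟦X⟧) : (C c * G).order = G.order := by
  have hC : (C c).order = 0 := by simpa using order_X_pow_mul (u := C c) (by simpa) 0
  rw [order_mul, hC, zero_add]

theorem order_subst {F G : R⟦X⟧} {d o : ℕ} (hF : F.order = d) (hG : G.order = o) (ho : o ≠ 0) :
    PowerSeries.order (F.subst G) = ↑(d * o) := by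
  obtain ⟨U, hU, rfl⟩ := exists_eq_X_pow_mul_of_order_eq hF
  have hG0 : constantCoeff G = 0 := order_ne_zero_iff_constCoeff_eq_zero.1 (by simp [hG, ho])
  obtain ⟨G₁, hG₁, rfl⟩ := exists_eq_X_pow_mul_of_order_eq hG
  rw [subst_X_pow_mul (HasSubst.of_constantCoeff_zero' hG0), mul_pow, ← pow_mul, mul_assoc,
    mul_comm o]
  refine order_X_pow_mul ?_ _
  rw [map_mul, map_pow, constantCoeff_subst_of_constantCoeff_eq_zero hG0]
  exact mul_ne_zero (pow_ne_zero _ hG₁) hU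

/-- With `F = X ^ d * U`, `W = X ^ o * W₁` and `h = X ^ (o + p) * H`, the difference is
`X ^ (d * o + p)` times a series with constant term `d * U(0) * W₁(0) ^ (d - 1) * H(0)`,
which is nonzero in characteristic zero. -/
theorem order_subst_add_sub_subst [CharZero R] {F W h : R⟦X⟧} {d o p : ℕ} (hd : d ≠ 0)
    (ho : o ≠ 0) (hp : p ≠ 0) (hF : F.order = d) (hW : W.order = o) (hh : h.order = ↑(o + p)) :
    PowerSeries.order (F.subst (W + h) - F.subst W) = ↑(d * o + p) := by
  obtain ⟨U, hU, rfl⟩ := exists_eq_X_pow_mul_of_order_eq hF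
  obtain ⟨W₁, hW₁, rfl⟩ := exists_eq_X_pow_mul_of_order_eq hW
  obtain ⟨H, hH, rfl⟩ := exists_eq_X_pow_mul_of_order_eq hh
  obtain ⟨V₁, hV₁⟩ : ∃ V₁, V₁ = W₁ + X ^ p * H := ⟨_, rfl⟩
  have hV : X ^ o * W₁ + X ^ (o + p) * H = X ^ o * V₁ := by rw [hV₁]; ring
  have hsW : HasSubst (X ^ o * W₁) := HasSubst.of_constantCoeff_zero' (by simp [ho])
  have hsV : HasSubst (X ^ o * V₁) := HasSubst.of_constantCoeff_zero' (by simp [ho])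
  obtain ⟨E, hE⟩ := X_pow_dvd_subst_sub_subst hsV hsW (N := o + p) ⟨H, by rw [hV₁]; ring⟩ U
  obtain ⟨S, hS⟩ : ∃ S, S = ∑ i ∈ Finset.range d, V₁ ^ i * W₁ ^ (d - 1 - i) := ⟨_, rfl⟩
  have hSV : S * (X ^ p * H) = V₁ ^ d - W₁ ^ d := by
    rw [hS, ← geom_sum₂_mul, hV₁, add_sub_cancel_left]
  have key : (X ^ d * U).subst (X ^ o * W₁ + X ^ (o + p) * H) - (X ^ d * U).subst (X ^ o * W₁) =
      X ^ (d * o + p) * (H * S * U.subst (X ^ o * V₁) + X ^ o * W₁ ^ d * E) := by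
    rw [hV, subst_X_pow_mul hsV, subst_X_pow_mul hsW]
    linear_combination (-(X ^ (d * o) * U.subst (X ^ o * V₁))) * hSV + (X ^ (d * o) * W₁ ^ d) * hE
  rw [key, order_X_pow_mul]
  have hcV : constantCoeff V₁ = constantCoeff W₁ := by simp [hV₁, hp]
  have hcS : constantCoeff S = d * constantCoeff W₁ ^ (d - 1) := by
    rw [hS, map_sum]
    simp_rw [map_mul, map_pow, hcV, ← pow_add]
    rw [Finset.sum_congr rfl fun i hi => by rw [Nat.add_sub_cancel' (by simp at hi; omega)]]
    simp
  have hcU : constantCoeff (U.subst (X ^ o * V₁)) = constantCoeff U :=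
    constantCoeff_subst_of_constantCoeff_eq_zero (by simp [ho]) U
  simp [hcS, hcU, hd, hH, hW₁, hU, ho]

theorem le_order_rescale_pow_sub {A : R⟦X⟧} {ζ : R} {d N : ℕ}
    (h : ↑N ≤ (rescale ζ A - C (ζ ^ d) * A).order) (j : ℕ) :
    ↑N ≤ (rescale (ζ ^ j) A - C ((ζ ^ j) ^ d) * A).order := by
  refine nat_le_order _ _ fun i hi => ?_
  have h₁ := coeff_of_lt_order i (lt_of_lt_of_le (by exact_mod_cast hi) h)
  simp only [map_sub, coeff_rescale, coeff_C_mul, ← sub_mul, mul_eq_zero, sub_eq_zero] at h₁ ⊢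
  rcases h₁ with h₁ | h₁
  · left
    rw [pow_right_comm, h₁, pow_right_comm]
  · exact Or.inr h₁

/-- The defect of `A ∘ G` is the Taylor term `A (c G + Δ) - A (c G)`, of order exactly
`d * o + p`, plus `(A (c z) - c ^ d A (z)) ∘ G`, of order at least `(d + p) * o > d * o + p`. -/
theorem order_rescale_sub_subst [CharZero R] {A G : R⟦X⟧} {ζ c : R} {d o p : ℕ} (hd : d ≠ 0)
    (ho : 2 ≤ o) (hp : p ≠ 0) (hc : c ≠ 0) (hA : A.order = d) (hG : G.order = o)
    (hAc : ↑(d + p) ≤ (rescale c A - C (c ^ d) * A).order)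
    (hGζ : (rescale ζ G - C c * G).order = ↑(o + p)) :
    PowerSeries.order (rescale ζ (A.subst G) - C (c ^ d) * A.subst G) = ↑(d * o + p) := by
  have hsG : HasSubst G :=
    HasSubst.of_constantCoeff_zero' (order_ne_zero_iff_constCoeff_eq_zero.1 (by simp [hG]; omega))
  have hsplit : rescale ζ (A.subst G) - C (c ^ d) * A.subst G =
      (A.subst (C c * G + (rescale ζ G - C c * G)) - A.subst (C c * G)) +
        (rescale c A - C (c ^ d) * A).subst G := by
    have hCA : (C (c ^ d) * A).subst G = C (c ^ d) * A.subst G := by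
      rw [← smul_eq_C_mul, subst_smul hsG, smul_eq_C_mul]
    rw [rescale_subst ζ hsG, subst_C_mul c hsG, subst_sub hsG, hCA, add_sub_cancel]
    ring
  have hmain := order_subst_add_sub_subst hd (by omega) hp hA
    ((order_C_mul hc G).trans hG) hGζ
  have hrest : ↑(d * o + p) < PowerSeries.order ((rescale c A - C (c ^ d) * A).subst G) := by
    have h₁ : G.order * (rescale c A - C (c ^ d) * A).order ≤
        PowerSeries.order ((rescale c A - C (c ^ d) * A).subst G) := by
      simpa only [order_eq_order] using le_order_subst G hsG (rescale c A - C (c ^ d) * A)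
    have h₂ : G.order * ↑(d + p) ≤ G.order * (rescale c A - C (c ^ d) * A).order := by gcongr
    refine lt_of_lt_of_le ?_ (h₁.trans' h₂)
    rw [hG]
    norm_cast
    have : 1 ≤ p := Nat.one_le_iff_ne_zero.2 hp
    nlinarith
  rw [hsplit, order_add_of_order_ne _ _ (by rw [hmain]; exact hrest.ne), hmain]
  exact min_eq_left hrest.le

theorem eq_pow_of_rescale_eq_C_mul {G : R⟦X⟧} {ζ c : R} {n : ℕ} (hG : G.order = n)
    (h : rescale ζ G = C c * G) : c = ζ ^ n := by
  have h₁ := congrArg (coeff n) h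
  rw [coeff_rescale, coeff_C_mul] at h₁
  exact (mul_right_cancel₀ (order_eq_nat.1 hG).1 h₁).symm

end IsDomain

end PowerSeries

section Field

variable {k : Type*} [Field k]

theorem comp_eq_subst_s18 (F : k⟦X⟧) {G : k⟦X⟧} (hG : constantCoeff G = 0) :
    comp F G = F.subst G := by
  ext n
  rw [coeff_subst' (HasSubst.of_constantCoeff_zero' hG),
    finsum_eq_sum_of_support_subset (s := Finset.range (n + 1))]
  · simp [comp]
  · intro i hi
    contrapose! hi
    have : X ^ i ∣ G ^ i := pow_dvd_pow_of_dvd (X_dvd_iff.2 hG) i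
    simp_all [X_pow_dvd_iff.1 this n]

theorem constantCoeff_iterComp {A : k⟦X⟧} (hA : constantCoeff A = 0) (t : ℕ) :
    constantCoeff (iterComp A t) = 0 := by
  induction t with
  | zero => simp [iterComp]
  | succ t ih =>
    rw [iterComp, comp_eq_subst_s18 _ ih, constantCoeff_subst_of_constantCoeff_eq_zero ih, hA]

theorem iterComp_succ {A : k⟦X⟧} (hA : constantCoeff A = 0) (t : ℕ) :
    iterComp A (t + 1) = A.subst (iterComp A t) :=
  comp_eq_subst_s18 _ (constantCoeff_iterComp hA t)

theorem order_iterComp {A : k⟦X⟧} {d : ℕ} (hd : d ≠ 0) (hA : A.order = d) (t : ℕ) :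
    (iterComp A t).order = ↑(d ^ t) := by
  have hA₀ : constantCoeff A = 0 := order_ne_zero_iff_constCoeff_eq_zero.1 (by simp [hA, hd])
  induction t with
  | zero => simp [iterComp]
  | succ t ih => rw [iterComp_succ hA₀, order_subst hA ih (by positivity), pow_succ']

theorem order_rescale_sub_iterComp [CharZero k] {A : k⟦X⟧} {ζ : k} {d p : ℕ} (hd : 2 ≤ d)
    (hp : p ≠ 0) (hζ : ζ ≠ 0) (hA : A.order = d)
    (hΔ : (rescale ζ A - C (ζ ^ d) * A).order = ↑(d + p)) {t : ℕ} (ht : 1 ≤ t) :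
    (rescale ζ (iterComp A t) - C (ζ ^ d ^ t) * iterComp A t).order = ↑(d ^ t + p) := by
  have hA₀ : constantCoeff A = 0 := order_ne_zero_iff_constCoeff_eq_zero.1 (by simp [hA]; omega)
  induction t, ht using Nat.le_induction with
  | base =>
    have h₁ : iterComp A 1 = A := by rw [iterComp_succ hA₀ 0]; exact X_subst A
    rwa [h₁, pow_one]
  | succ t ht ih =>
    have hdt : 2 ≤ d ^ t := le_trans hd (Nat.le_self_pow (by omega) d)
    have := order_rescale_sub_subst (by omega) hdt hp (pow_ne_zero _ hζ) hA
      (order_iterComp (by omega) hA t) (le_order_rescale_pow_sub hΔ.ge (d ^ t)) ih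
    rwa [← pow_mul, ← pow_succ, ← pow_succ', ← iterComp_succ hA₀] at this

theorem rescale_eq_of_rescale_iterComp_eq [CharZero k] {A : k⟦X⟧} {ζ c : k} {d s : ℕ}
    (hd : 2 ≤ d) (hζ : ζ ≠ 0) (hA : A.order = d) (hs : 1 ≤ s)
    (h : rescale ζ (iterComp A s) = C c * iterComp A s) :
    rescale ζ A = C (ζ ^ d) * A := by
  have hc : c = ζ ^ d ^ s := eq_pow_of_rescale_eq_C_mul (order_iterComp (by omega) hA s) h
  by_contra hne
  obtain ⟨n, hn⟩ := ENat.ne_top_iff_exists.1 (order_eq_top.not.2 (sub_ne_zero.2 hne))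
  have hdn : d < n := by
    by_contra! hnd
    have hcoeff := (order_eq_nat.1 hn.symm).1
    simp only [map_sub, coeff_rescale, coeff_C_mul] at hcoeff
    rcases hnd.lt_or_eq with hlt | rfl
    · exact hcoeff (by rw [coeff_of_lt_order n (by rw [hA]; exact_mod_cast hlt)]; ring)
    · exact hcoeff (sub_self _)
  obtain ⟨p, rfl⟩ := Nat.exists_eq_add_of_le hdn.le
  have := order_rescale_sub_iterComp hd (by omega) hζ hA hn.symm hs
  rw [h, hc, sub_self, order_zero] at this
  exact ENat.top_ne_natCast _ this

theorem rescale_X_pow_mul_comp_X_pow {ζ : k} {m : ℕ} (hm : m ≠ 0) (hζ : ζ ^ m = 1) (r : ℕ)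
    (R : k⟦X⟧) : rescale ζ (X ^ r * comp R (X ^ m)) = C (ζ ^ r) * (X ^ r * comp R (X ^ m)) := by
  have hXm : HasSubst (X ^ m : k⟦X⟧) := HasSubst.X_pow hm
  rw [comp_eq_subst_s18 _ (by simp [hm]), map_mul, map_pow, rescale_X, rescale_subst ζ hXm, map_pow,
    rescale_X, mul_pow, mul_pow, ← map_pow, ← map_pow, hζ, map_one, one_mul, mul_assoc]

theorem exists_eq_X_pow_mul_comp_X_pow_of_rescale_eq {ζ : k} {m n : ℕ} (hm : m ≠ 0)
    (hζ : IsPrimitiveRoot ζ m) {F : k⟦X⟧} (h : rescale ζ F = C (ζ ^ n) * F) :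
    ∃ (R₀ : k⟦X⟧) (r₀ : ℕ), F = X ^ r₀ * comp R₀ (X ^ m) := by
  have hsupp : ∀ N, coeff N F ≠ 0 → N % m = n % m := by
    intro N hN
    have h₁ := congrArg (coeff N) h
    rw [coeff_rescale, coeff_C_mul] at h₁
    have h₂ := (hζ.isOfFinOrder hm).pow_inj_mod.1 (mul_right_cancel₀ hN h₁)
    rwa [← hζ.eq_orderOf] at h₂
  refine ⟨mk fun j => coeff (n % m + m * j) F, n % m, ?_⟩
  ext N
  rw [comp_eq_subst_s18 _ (by simp [hm]), coeff_X_pow_mul', coeff_subst_X_pow hm]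
  split_ifs with hle hdvd
  · rw [Algebra.algebraMap_self, RingHom.id_apply, coeff_mk, Nat.mul_div_cancel' hdvd,
      Nat.add_sub_cancel' hle]
  · by_contra! hN
    rw [← hsupp N hN] at hdvd
    exact hdvd (Nat.dvd_sub_mod N)
  · by_contra! hN
    exact hle (hsupp N hN ▸ Nat.mod_le N m)

end Field

theorem stmt18_general {k : Type*} [Field k] [IsAlgClosed k] [CharZero k]
    {m s r : ℕ} (hm : 2 ≤ m) (hs : 1 ≤ s)
    (A R : PowerSeries k) (hA2 : 2 ≤ A.order)
    (h : iterComp A s = X ^ r * comp R (X ^ m)) :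
    ∃ (R₀ : PowerSeries k) (r₀ : ℕ), A = X ^ r₀ * comp R₀ (X ^ m) := by
  rcases eq_or_ne A 0 with rfl | hA
  · exact ⟨0, 0, by ext; simp [comp]⟩
  obtain ⟨d, hd⟩ := ENat.ne_top_iff_exists.1 (order_eq_top.not.2 hA)
  have : NeZero m := ⟨by omega⟩
  obtain ⟨ζ, hζ⟩ := HasEnoughRootsOfUnity.exists_primitiveRoot k m
  have hiter := rescale_X_pow_mul_comp_X_pow (by omega) hζ.pow_eq_one r R
  rw [← h] at hiter
  have hA' := rescale_eq_of_rescale_iterComp_eq (by rw [← hd] at hA2; exact_mod_cast hA2)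
    (hζ.ne_zero (by omega)) hd.symm hs hiter
  exact exists_eq_X_pow_mul_comp_X_pow_of_rescale_eq (by omega) hζ hA'

theorem stmt18 {k : Type*} [Field k] [IsAlgClosed k] [CharZero k]
    {m s r : ℕ} (hm : 2 ≤ m) (hs : 1 ≤ s)
    (A R : PowerSeries k) (hA : A ≠ 0) (hA2 : 2 ≤ A.order)
    (h : iterComp A s = X ^ r * comp R (X ^ m)) :
    ∃ (R₀ : PowerSeries k) (r₀ : ℕ), A = X ^ r₀ * comp R₀ (X ^ m) :=
  stmt18_general hm hs A R hA2 h
end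

section
/- Let k be an algebraically closed field of characteristic zero and A, B ∈ k[[z]] of order at least 2. Then the equation X ∘ A = Y ∘ B has a solution with X, Y ∈ z·k[[z]] if and only if φ_A ∘ φ_B = φ_B ∘ φ_A for all transition functions φ_A of A and φ_B of B (order-1 series with A ∘ φ_A = A and B ∘ φ_B = B). -/
open PowerSeries

/-!
Every nonzero `F` with `F(0) = 0`, say of order `N`, is `τ ^ N` for some `τ` of order one (take an
`N`-th root of the unit part of `F` with the binomial series). If `F ∘ φ = F` then
`(τ ∘ φ) ^ N = τ ^ N`, so `τ ∘ φ = ξ • τ` for a root of unity `ξ`: conjugated by `τ`, the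
symmetries of `F` are scalings, hence commute. With `F = X ∘ A = Y ∘ B` this gives one direction.

Conversely write `A = σ ^ n`, `B = τ ^ m`. The transition functions of `B` are
`τ⁻¹ ∘ (ξ • τ)` for `ξ ^ m = 1`, and a series invariant under the one with `ξ` primitive is a
series in `τ ^ m = B`, since after conjugation by `τ` it is invariant under `z ↦ ξ z`. The product
of `A ∘ ψ` over the transition functions `ψ` of `B` is invariant under those of `B`, which permute
the factors, and, by the commutation hypothesis, under those of `A`; so it lies in both
`k⟦A⟧` and `k⟦B⟧`.
-/

namespace PowerSeries

section Subst

variable {R : Type*} [CommRing R]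

theorem coeff_subst_eq_sum {a b : R⟦X⟧} (hb : constantCoeff b = 0) (n : ℕ) :
    coeff n (a.subst b) = ∑ i ∈ Finset.range (n + 1), coeff i a * coeff n (b ^ i) := by
  rw [coeff_subst' (HasSubst.of_constantCoeff_zero' hb)]
  simp_rw [smul_eq_mul]
  refine finsum_eq_sum_of_support_subset _ fun i hi ↦ Finset.mem_range_succ_iff.mpr ?_
  by_contra! hni
  have hdvd : X ^ i ∣ b ^ i := pow_dvd_pow_of_dvd (X_dvd_iff.mpr hb) i
  exact hi (by simp [X_pow_dvd_iff.mp hdvd n hni])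

theorem constantCoeff_subst_of_constantCoeff_eq_zero_s19 {a b : R⟦X⟧} (hb : constantCoeff b = 0) :
    constantCoeff (a.subst b) = constantCoeff a := by
  simpa using coeff_subst_eq_sum (a := a) hb 0

theorem coeff_one_subst {a b : R⟦X⟧} (hb : constantCoeff b = 0) :
    coeff 1 (a.subst b) = coeff 1 a * coeff 1 b := by
  simp [coeff_subst_eq_sum hb, Finset.sum_range_succ]

theorem subst_prod {ι : Type*} {φ : R⟦X⟧} (hφ : HasSubst φ) (s : Finset ι) (f : ι → R⟦X⟧) :
    (∏ i ∈ s, f i).subst φ = ∏ i ∈ s, (f i).subst φ := by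
  rw [← coe_substAlgHom hφ, map_prod]

theorem eq_of_subst_eq_subst {τ f g : R⟦X⟧} (hτ : constantCoeff τ = 0) (hτ1 : IsUnit (coeff 1 τ))
    (hf : constantCoeff f = 0) (hg : constantCoeff g = 0) (h : τ.subst f = τ.subst g) : f = g := by
  have hτ' := HasSubst.of_constantCoeff_zero' hτ
  have hf' := HasSubst.of_constantCoeff_zero' hf
  have hg' := HasSubst.of_constantCoeff_zero' hg
  rw [← subst_X (R := R) hf', ← subst_X (R := R) hg', ← subst_substInvOfIsUnit_left τ hτ hτ1,
    subst_comp_subst_apply hτ' hf', subst_comp_subst_apply hτ' hg', h]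

end Subst

theorem order_eq_one_iff {R : Type*} [Semiring R] {φ : R⟦X⟧} :
    φ.order = 1 ↔ constantCoeff φ = 0 ∧ coeff 1 φ ≠ 0 := by
  rw [← Nat.cast_one, order_eq_nat]
  simp [and_comm]

theorem binomialSeries_nsmul {R A : Type*} [CommRing R] [BinomialRing R] [Ring A] [Algebra R A]
    (N : ℕ) (r : R) : binomialSeries A (N • r) = binomialSeries A r ^ N := by
  induction N with
  | zero => simp
  | succ N ih => rw [succ_nsmul, binomialSeries_add, ih, pow_succ]

end PowerSeries

theorem IsPrimitiveRoot.exists_eq_pow_mul_of_pow_eq_pow {R : Type*} [CommRing R] [IsDomain R]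
    {ζ : R} {N : ℕ} [NeZero N] (hζ : IsPrimitiveRoot ζ N) {a b : R} (hb : b ≠ 0)
    (hab : a ^ N = b ^ N) : ∃ i < N, a = ζ ^ i * b := by
  have hinj := IsFractionRing.injective R (FractionRing R)
  have hb' : algebraMap R (FractionRing R) b ≠ 0 := (map_ne_zero_iff _ hinj).mpr hb
  obtain ⟨i, hi, hζi⟩ := (hζ.map_of_injective hinj).eq_pow_of_pow_eq_one
    (ξ := algebraMap R (FractionRing R) a / algebraMap R (FractionRing R) b)
    (by rw [div_pow, ← map_pow, ← map_pow, hab, map_pow, div_self (pow_ne_zero _ hb')])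
  refine ⟨i, hi, hinj ?_⟩
  rw [map_mul, map_pow, hζi, div_mul_cancel₀ _ hb']

namespace PowerSeries

section Domain

variable {R : Type*} [CommRing R] [IsDomain R]

theorem subst_ne_zero {a b : R⟦X⟧} (ha : a ≠ 0) (hb : b ≠ 0) (hb0 : constantCoeff b = 0) :
    a.subst b ≠ 0 := by
  have hb' := HasSubst.of_constantCoeff_zero' hb0
  have hu : constantCoeff (a.divXPowOrder.subst b) ≠ 0 := by
    rw [constantCoeff_subst_of_constantCoeff_eq_zero_s19 hb0]
    exact constantCoeff_divXPowOrder_eq_zero_iff.not.mpr ha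
  rw [← X_pow_order_mul_divXPowOrder (f := a), subst_mul hb', subst_pow hb', subst_X hb']
  exact mul_ne_zero (pow_ne_zero _ hb) fun h ↦ hu (by rw [h, map_zero])

theorem exists_subst_eq_smul_of_pow_subst_eq {τ φ : R⟦X⟧} {N : ℕ} [NeZero N] {ζ : R}
    (hζ : IsPrimitiveRoot ζ N) (hτ : τ ≠ 0) (hφ : constantCoeff φ = 0)
    (h : (τ ^ N).subst φ = τ ^ N) : ∃ ξ : R, τ.subst φ = ξ • τ := by
  rw [subst_pow (HasSubst.of_constantCoeff_zero' hφ)] at h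
  obtain ⟨i, -, hi⟩ :=
    (hζ.map_of_injective (C_injective (R := R))).exists_eq_pow_mul_of_pow_eq_pow hτ h
  exact ⟨ζ ^ i, by rw [hi, ← map_pow, smul_eq_C_mul]⟩

theorem exists_expand_eq_of_rescale_eq {ζ : R} {n : ℕ} (hn : n ≠ 0) (hζ : IsPrimitiveRoot ζ n)
    {H : R⟦X⟧} (h : rescale ζ H = H) : ∃ G : R⟦X⟧, expand n hn G = H := by
  refine ⟨mk fun i ↦ coeff (n * i) H, ext fun j ↦ ?_⟩
  rw [coeff_expand]
  split_ifs with hj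
  · rw [coeff_mk, Nat.mul_div_cancel' hj]
  · have hζj : ζ ^ j - 1 ≠ 0 := sub_ne_zero.mpr fun h1 ↦ hj ((hζ.pow_eq_one_iff_dvd j).mp h1)
    have hcoeff : (ζ ^ j - 1) * coeff j H = 0 := by
      rw [sub_mul, one_mul, ← coeff_rescale, h, sub_self]
    exact ((mul_eq_zero.mp hcoeff).resolve_left hζj).symm

end Domain

variable {k : Type*} [Field k]

theorem exists_pow_eq_of_constantCoeff_eq_pow [CharZero k] {u : k⟦X⟧} {N : ℕ} (hN : N ≠ 0)
    {c : k} (hc : c ≠ 0) (hcu : c ^ N = constantCoeff u) : ∃ v : k⟦X⟧, v ^ N = u := by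
  set w := C (c ^ N)⁻¹ * u - 1
  have hw : HasSubst w := HasSubst.of_constantCoeff_zero' (by simp [w, ← hcu, hc])
  refine ⟨C c * (binomialSeries k (N : k)⁻¹).subst w, ?_⟩
  rw [mul_pow, ← subst_pow hw, ← binomialSeries_nsmul, nsmul_eq_mul,
    mul_inv_cancel₀ (Nat.cast_ne_zero.mpr hN), ← Nat.cast_one, binomialSeries_nat, pow_one,
    ← coe_substAlgHom hw, map_add, map_one, coe_substAlgHom, subst_X hw]
  simp [w, ← map_pow, ← mul_assoc, ← map_mul, hc]

theorem exists_pow_eq_of_constantCoeff_eq_zero [IsAlgClosed k] [CharZero k] {F : k⟦X⟧}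
    (hF : F ≠ 0) (hF0 : constantCoeff F = 0) :
    ∃ N ≠ 0, ∃ τ : k⟦X⟧, constantCoeff τ = 0 ∧ coeff 1 τ ≠ 0 ∧ τ ^ N = F := by
  obtain ⟨N, hFN⟩ := ENat.ne_top_iff_exists.mp (order_eq_top.not.mpr hF)
  have hN : N ≠ 0 := by
    rintro rfl
    exact (order_eq_nat.mp hFN.symm).1 (by rwa [coeff_zero_eq_constantCoeff_apply])
  have hFX : X ^ N * F.divXPowOrder = F := by
    simpa [← hFN] using X_pow_order_mul_divXPowOrder (f := F)
  have hu : constantCoeff F.divXPowOrder ≠ 0 := constantCoeff_divXPowOrder_eq_zero_iff.not.mpr hF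
  obtain ⟨c, hc⟩ := IsAlgClosed.exists_pow_nat_eq (constantCoeff F.divXPowOrder)
    (Nat.pos_of_ne_zero hN)
  have hc0 : c ≠ 0 := by
    rintro rfl
    exact hu (by rw [← hc, zero_pow hN])
  obtain ⟨v, hv⟩ := exists_pow_eq_of_constantCoeff_eq_pow hN hc0 hc
  refine ⟨N, hN, X * v, by simp, ?_, by rw [mul_pow, hv, hFX]⟩
  rw [coeff_succ_X_mul, coeff_zero_eq_constantCoeff]
  intro h
  apply hu
  rw [← hv, map_pow, h, zero_pow hN]

theorem subst_comm_of_subst_eq_self [IsAlgClosed k] [CharZero k] {F φ ψ : k⟦X⟧} (hF : F ≠ 0)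
    (hF0 : constantCoeff F = 0) (hφ : constantCoeff φ = 0) (hψ : constantCoeff ψ = 0)
    (hFφ : F.subst φ = F) (hFψ : F.subst ψ = F) : φ.subst ψ = ψ.subst φ := by
  have hφ' := HasSubst.of_constantCoeff_zero' hφ
  have hψ' := HasSubst.of_constantCoeff_zero' hψ
  obtain ⟨N, hN, τ, hτ0, hτ1, rfl⟩ := exists_pow_eq_of_constantCoeff_eq_zero hF hF0
  have : NeZero N := ⟨hN⟩
  have hτ : τ ≠ 0 := by rintro rfl; simp at hτ1
  obtain ⟨ζ, hζ⟩ := HasEnoughRootsOfUnity.exists_primitiveRoot k N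
  obtain ⟨a, ha⟩ := exists_subst_eq_smul_of_pow_subst_eq hζ hτ hφ hFφ
  obtain ⟨b, hb⟩ := exists_subst_eq_smul_of_pow_subst_eq hζ hτ hψ hFψ
  apply eq_of_subst_eq_subst hτ0 hτ1.isUnit
    (by rw [constantCoeff_subst_of_constantCoeff_eq_zero_s19 hψ, hφ])
    (by rw [constantCoeff_subst_of_constantCoeff_eq_zero_s19 hφ, hψ])
  rw [← subst_comp_subst_apply hφ' hψ', ← subst_comp_subst_apply hψ' hφ', ha, hb,
    subst_smul hψ', subst_smul hφ', ha, hb, smul_smul, smul_smul, mul_comm]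

theorem subst_comm_of_subst_eq_subst [IsAlgClosed k] [CharZero k] {A B G H φ ψ : k⟦X⟧}
    (hA : A ≠ 0) (hA0 : constantCoeff A = 0) (hB0 : constantCoeff B = 0) (hG : G ≠ 0)
    (hG0 : constantCoeff G = 0) (hGH : G.subst A = H.subst B) (hφ : constantCoeff φ = 0)
    (hAφ : A.subst φ = A) (hψ : constantCoeff ψ = 0) (hBψ : B.subst ψ = B) :
    φ.subst ψ = ψ.subst φ := by
  refine subst_comm_of_subst_eq_self (subst_ne_zero hG hA hA0)
    (by rwa [constantCoeff_subst_of_constantCoeff_eq_zero_s19 hA0]) hφ hψ ?_ ?_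
  · rw [subst_comp_subst_apply (HasSubst.of_constantCoeff_zero' hA0)
      (HasSubst.of_constantCoeff_zero' hφ), hAφ]
  · rw [hGH, subst_comp_subst_apply (HasSubst.of_constantCoeff_zero' hB0)
      (HasSubst.of_constantCoeff_zero' hψ), hBψ]

/-- `τ⁻¹ ∘ (ξ • τ)`; for `ξ ^ n = 1` these are the transition functions of `τ ^ n`. -/
noncomputable def transition (τ : k⟦X⟧) [Invertible (coeff 1 τ)] (ξ : k) : k⟦X⟧ :=
  τ.substInv.subst (ξ • τ)

section Transition

variable {τ : k⟦X⟧} [Invertible (coeff 1 τ)] (hτ : constantCoeff τ = 0)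
include hτ

theorem constantCoeff_transition (ξ : k) : constantCoeff (transition τ ξ) = 0 := by
  rw [transition, constantCoeff_subst_of_constantCoeff_eq_zero_s19 (by simp [hτ]),
    constantCoeff_substInv]

theorem coeff_one_transition (ξ : k) : coeff 1 (transition τ ξ) = ξ := by
  rw [transition, coeff_one_subst (by simp [hτ]), coeff_one_substInv, coeff_smul, smul_eq_mul,
    ← mul_assoc, mul_comm, ← mul_assoc, mul_invOf_self', one_mul]

theorem order_transition {ξ : k} (hξ : ξ ≠ 0) : (transition τ ξ).order = 1 :=
  order_eq_one_iff.mpr ⟨constantCoeff_transition hτ ξ, (coeff_one_transition hτ ξ).symm ▸ hξ⟩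

theorem subst_transition (ξ : k) : τ.subst (transition τ ξ) = ξ • τ := by
  have hξτ : HasSubst (ξ • τ) := HasSubst.of_constantCoeff_zero' (by simp [hτ])
  rw [transition, ← subst_comp_subst_apply (HasSubst.substInv τ) hξτ, subst_substInv_right τ hτ,
    subst_X hξτ]

theorem transition_subst_transition (ξ η : k) :
    (transition τ ξ).subst (transition τ η) = transition τ (ξ * η) := by
  have hξ := HasSubst.of_constantCoeff_zero' (constantCoeff_transition hτ ξ)
  have hη := HasSubst.of_constantCoeff_zero' (constantCoeff_transition hτ η)
  refine eq_of_subst_eq_subst hτ (isUnit_of_invertible _)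
    (by rw [constantCoeff_subst_of_constantCoeff_eq_zero_s19 (constantCoeff_transition hτ η),
      constantCoeff_transition hτ]) (constantCoeff_transition hτ _) ?_
  rw [← subst_comp_subst_apply hξ hη, subst_transition hτ, subst_smul hη, subst_transition hτ,
    subst_transition hτ, smul_smul]

theorem pow_subst_transition {n : ℕ} {ξ : k} (hξ : ξ ^ n = 1) :
    (τ ^ n).subst (transition τ ξ) = τ ^ n := by
  rw [subst_pow (HasSubst.of_constantCoeff_zero' (constantCoeff_transition hτ ξ)),
    subst_transition hτ, smul_pow, hξ, one_smul]

theorem exists_subst_pow_eq_of_subst_transition_eq {n : ℕ} [NeZero n] {ζ : k}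
    (hζ : IsPrimitiveRoot ζ n) {F : k⟦X⟧} (hF : F.subst (transition τ ζ) = F) :
    ∃ G : k⟦X⟧, G.subst (τ ^ n) = F := by
  have hι : HasSubst τ.substInv := HasSubst.substInv τ
  have hτ' := HasSubst.of_constantCoeff_zero' hτ
  have hT := HasSubst.of_constantCoeff_zero' (constantCoeff_transition hτ ζ)
  have hconj : τ.substInv.subst (ζ • X : k⟦X⟧) = (transition τ ζ).subst τ.substInv := by
    rw [transition, subst_comp_subst_apply (HasSubst.of_constantCoeff_zero' (by simp [hτ])) hι,
      subst_smul hι, subst_substInv_right τ hτ]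
  obtain ⟨G, hG⟩ := exists_expand_eq_of_rescale_eq (NeZero.ne n) hζ (H := F.subst τ.substInv) (by
    rw [rescale_eq_subst, subst_comp_subst_apply hι (HasSubst.smul_X' ζ), hconj,
      ← subst_comp_subst_apply hT hι, hF])
  have hτn : τ ^ n = (X ^ n : k⟦X⟧).subst τ := by rw [subst_pow hτ', subst_X hτ']
  refine ⟨G, ?_⟩
  rw [hτn, ← subst_comp_subst_apply (HasSubst.X_pow (NeZero.ne n)) hτ',
    ← expand_apply n (NeZero.ne n), hG, subst_comp_subst_apply hι hτ', subst_substInv_left τ hτ,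
    X_subst]

end Transition

open Polynomial (nthRootsFinset mem_nthRootsFinset)

noncomputable def transitionNorm (τ : k⟦X⟧) [Invertible (coeff 1 τ)] (m : ℕ) (A : k⟦X⟧) :
    k⟦X⟧ :=
  ∏ ξ ∈ nthRootsFinset m (1 : k), A.subst (transition τ ξ)

section TransitionNorm

variable {τ : k⟦X⟧} [Invertible (coeff 1 τ)] (hτ : constantCoeff τ = 0) {m : ℕ} {A : k⟦X⟧}
include hτ

theorem transitionNorm_subst_transition {η : k} (hη : η ∈ nthRootsFinset m (1 : k)) :
    (transitionNorm τ m A).subst (transition τ η) = transitionNorm τ m A := by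
  have hT (ξ : k) := HasSubst.of_constantCoeff_zero' (constantCoeff_transition hτ ξ)
  have hm : 0 < m := Nat.pos_of_ne_zero (by rintro rfl; simp at hη)
  rw [mem_nthRootsFinset hm] at hη
  have hη0 : η ≠ 0 := by rintro rfl; simp [hm.ne'] at hη
  rw [transitionNorm, subst_prod (hT η)]
  refine Finset.prod_nbij' (· * η) (· * η⁻¹) ?_ ?_ ?_ ?_ fun ξ _ ↦ ?_
  · simp_all [mem_nthRootsFinset hm, mul_pow]
  · simp_all [mem_nthRootsFinset hm, mul_pow]
  · simp [hη0]
  · simp [hη0]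
  · rw [subst_comp_subst_apply (hT ξ) (hT η), transition_subst_transition hτ]

theorem transitionNorm_subst_eq_self {φ : k⟦X⟧} (hφ : constantCoeff φ = 0) (hAφ : A.subst φ = A)
    (hcomm : ∀ ξ ∈ nthRootsFinset m (1 : k),
      φ.subst (transition τ ξ) = (transition τ ξ).subst φ) :
    (transitionNorm τ m A).subst φ = transitionNorm τ m A := by
  have hφ' := HasSubst.of_constantCoeff_zero' hφ
  rw [transitionNorm, subst_prod hφ']
  refine Finset.prod_congr rfl fun ξ hξ ↦ ?_
  have hT := HasSubst.of_constantCoeff_zero' (constantCoeff_transition hτ ξ)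
  rw [subst_comp_subst_apply hT hφ', ← hcomm ξ hξ, ← subst_comp_subst_apply hφ' hT, hAφ]

theorem transitionNorm_ne_zero (hA : A ≠ 0) : transitionNorm τ m A ≠ 0 := by
  refine Finset.prod_ne_zero_iff.mpr fun ξ hξ ↦
    subst_ne_zero hA (fun h ↦ ?_) (constantCoeff_transition hτ ξ)
  apply Polynomial.ne_zero_of_mem_nthRootsFinset one_ne_zero hξ
  rw [← coeff_one_transition hτ ξ, h, map_zero]

theorem constantCoeff_transitionNorm (hm : m ≠ 0) (hA : constantCoeff A = 0) :
    constantCoeff (transitionNorm τ m A) = 0 := by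
  rw [transitionNorm, map_prod]
  refine Finset.prod_eq_zero (Polynomial.one_mem_nthRootsFinset (Nat.pos_of_ne_zero hm)) ?_
  rw [constantCoeff_subst_of_constantCoeff_eq_zero_s19 (constantCoeff_transition hτ 1), hA]

end TransitionNorm

theorem exists_subst_eq_subst_of_commute [IsAlgClosed k] [CharZero k] {A B : k⟦X⟧} (hA : A ≠ 0)
    (hA0 : constantCoeff A = 0) (hB : B ≠ 0) (hB0 : constantCoeff B = 0)
    (hcomm : ∀ φ ψ : k⟦X⟧, φ.order = 1 → A.subst φ = A → ψ.order = 1 → B.subst ψ = B →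
      φ.subst ψ = ψ.subst φ) :
    ∃ G H : k⟦X⟧, G ≠ 0 ∧ H ≠ 0 ∧ constantCoeff G = 0 ∧ constantCoeff H = 0 ∧
      G.subst A = H.subst B := by
  obtain ⟨n, hn, σ, hσ0, hσ1, rfl⟩ := exists_pow_eq_of_constantCoeff_eq_zero hA hA0
  obtain ⟨m, hm, τ, hτ0, hτ1, rfl⟩ := exists_pow_eq_of_constantCoeff_eq_zero hB hB0
  let _ := invertibleOfNonzero hσ1
  let _ := invertibleOfNonzero hτ1
  have : NeZero n := ⟨hn⟩
  have : NeZero m := ⟨hm⟩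
  obtain ⟨ζ, hζ⟩ := HasEnoughRootsOfUnity.exists_primitiveRoot k n
  obtain ⟨ξ, hξ⟩ := HasEnoughRootsOfUnity.exists_primitiveRoot k m
  set F := transitionNorm τ m (σ ^ n)
  have hFσ : F.subst (transition σ ζ) = F := by
    refine transitionNorm_subst_eq_self hτ0 (constantCoeff_transition hσ0 ζ)
      (pow_subst_transition hσ0 hζ.pow_eq_one) fun η hη ↦ ?_
    rw [mem_nthRootsFinset (Nat.pos_of_ne_zero hm)] at hη
    exact hcomm _ _ (order_transition hσ0 (hζ.ne_zero hn)) (pow_subst_transition hσ0 hζ.pow_eq_one)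
      (order_transition hτ0 (by rintro rfl; simp [hm] at hη)) (pow_subst_transition hτ0 hη)
  have hFτ : F.subst (transition τ ξ) = F := transitionNorm_subst_transition hτ0
    ((mem_nthRootsFinset (Nat.pos_of_ne_zero hm) 1).mpr hξ.pow_eq_one)
  have hF : F ≠ 0 := transitionNorm_ne_zero hτ0 hA
  obtain ⟨G, hG⟩ := exists_subst_pow_eq_of_subst_transition_eq hσ0 hζ hFσ
  obtain ⟨H, hH⟩ := exists_subst_pow_eq_of_subst_transition_eq hτ0 hξ hFτ
  have hF0 : constantCoeff F = 0 := constantCoeff_transitionNorm hτ0 hm hA0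
  refine ⟨G, H, ?_, ?_, ?_, ?_, hG.trans hH.symm⟩
  · rintro rfl
    exact hF (by rw [← hG, ← coe_substAlgHom (HasSubst.of_constantCoeff_zero' hA0), map_zero])
  · rintro rfl
    exact hF (by rw [← hH, ← coe_substAlgHom (HasSubst.of_constantCoeff_zero' hB0), map_zero])
  · rwa [← constantCoeff_subst_of_constantCoeff_eq_zero_s19 hA0, hG]
  · rwa [← constantCoeff_subst_of_constantCoeff_eq_zero_s19 hB0, hH]

end PowerSeries

theorem comp_eq_subst_s19 {k : Type*} [Field k] {b : k⟦X⟧} (hb : constantCoeff b = 0) (a : k⟦X⟧) :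
    comp a b = a.subst b := by
  ext n
  rw [coeff_subst_eq_sum hb, comp, coeff_mk]

theorem stmt19 {k : Type*} [Field k] [IsAlgClosed k] [CharZero k]
    (A B : PowerSeries k)
    (hA : A ≠ 0) (hA2 : 2 ≤ A.order) (hB : B ≠ 0) (hB2 : 2 ≤ B.order) :
    (∃ Xs Ys : PowerSeries k, Xs ≠ 0 ∧ Ys ≠ 0 ∧
        constantCoeff Xs = 0 ∧ constantCoeff Ys = 0 ∧ comp Xs A = comp Ys B) ↔
      ∀ φA φB : PowerSeries k, φA.order = 1 → comp A φA = A →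
        φB.order = 1 → comp B φB = B → comp φA φB = comp φB φA := by
  have hA0 : constantCoeff A = 0 := by
    simpa using coeff_of_lt_order 0 (lt_of_lt_of_le (by norm_num) hA2)
  have hB0 : constantCoeff B = 0 := by
    simpa using coeff_of_lt_order 0 (lt_of_lt_of_le (by norm_num) hB2)
  have hcomp {P φ : k⟦X⟧} (hφ : φ.order = 1) : comp P φ = P.subst φ :=
    comp_eq_subst_s19 (order_eq_one_iff.mp hφ).1 P
  simp only [comp_eq_subst_s19 hA0, comp_eq_subst_s19 hB0]
  constructor
  · rintro ⟨Xs, Ys, hXs, -, hXs0, -, hXY⟩ φA φB hφA hAφA hφB hBφB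
    rw [hcomp hφA] at hAφA
    rw [hcomp hφB] at hBφB
    rw [hcomp hφB, hcomp hφA]
    exact subst_comm_of_subst_eq_subst hA hA0 hB0 hXs hXs0 hXY (order_eq_one_iff.mp hφA).1 hAφA
      (order_eq_one_iff.mp hφB).1 hBφB
  · intro hcomm
    refine exists_subst_eq_subst_of_commute hA hA0 hB hB0 fun φ ψ hφ hAφ hψ hBψ ↦ ?_
    rw [← hcomp hφ] at hAφ
    rw [← hcomp hψ] at hBψ
    rw [← hcomp hψ, ← hcomp hφ]
    exact hcomm φ ψ hφ hAφ hψ hBψ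
end
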